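/- Let H be the subgroup of the symmetric group on {1,…,14} generated by (1,9,10)(2,3,8)(4,5,7)(11,12,14) and (1,3,9,6)(2,13,8,10)(4,11)(5,14,12,7). Then (i) there exist subgroups P ⊴ K ⊴ H such that the order of P is a power of 2, the quotient K/P is cyclic, and the quotient H/K has order a power of 2, and (ii) the orbits of H on {1,…,14} are exactly the 6-element set {4,5,7,11,12,14} and the 8-element set {1,2,3,6,8,9,10,13}. -/

import Mathlib

/-!
`H` is a copy of `S₄`. With `x = σ₂²` and `y = σ₁ x σ₁⁻¹`, the two generators satisfy the
relations `x² = 1`, `xy = yx`, `σ₁ y σ₁⁻¹ = xy`, `σ₂ y σ₂⁻¹ = xy` and `σ₂ σ₁ σ₂⁻¹ = xy σ₁⁻¹`,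
checked by evaluation. They force `P = ⟨x, y⟩` (a Klein four-group) and `K = ⟨σ₁⟩P` to be normal
in `H`; `K/P` is a quotient of `⟨σ₁⟩`, hence cyclic, and `H/K` is generated by the image of
`σ₂`, whose square `x` lies in `K`. The orbits are read off the generators: both sets are
invariant under `σ₁, σ₂`, and each is swept out from one point by the words `σ₂ʲ σ₁ⁱ`.
-/

section

attribute [local instance] Classical.propDecidable

/-- `H = ⟨(1,9,10)(2,3,8)(4,5,7)(11,12,14), (1,3,9,6)(2,13,8,10)(4,11)(5,14,12,7)⟩`
(the subgroup `G₆¹¹` of the paper). -/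
def H : Subgroup (Equiv.Perm (Fin 14)) :=
  Subgroup.closure {c[1,9,10] * c[2,3,8] * c[4,5,7] * c[11,12,14],
    c[1,3,9,6] * c[2,13,8,10] * c[4,11] * c[5,14,12,7]}

/-- The orbit of a point `x` under a subgroup `G` of permutations, as a finite set. -/
noncomputable def orbitFinset (G : Subgroup (Equiv.Perm (Fin 14))) (x : Fin 14) :
    Finset (Fin 14) :=
  Finset.univ.filter fun y => ∃ σ ∈ G, σ x = y

end

open Equiv Subgroup

def IsPsi₂₂ (G : Type*) [Group G] : Prop :=
  ∃ K : Subgroup G, ∃ hK : K.Normal, ∃ P : Subgroup K, ∃ hP : P.Normal,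
    (∃ m : ℕ, Nat.card P = 2 ^ m) ∧
    (letI := hP; IsCyclic (K ⧸ P)) ∧
    (letI := hK; ∃ m : ℕ, Nat.card (G ⧸ K) = 2 ^ m)

section GroupTheory

variable {G : Type*} [Group G]

theorem isPsi₂₂_of_le [Finite G] {P K : Subgroup G} [P.Normal] [K.Normal] (hPK : P ≤ K)
    (hP : IsPGroup 2 P) (hKP : IsCyclic (K ⧸ P.subgroupOf K)) (hGK : IsPGroup 2 (G ⧸ K)) :
    IsPsi₂₂ G := by
  obtain ⟨m, hm⟩ := hP.exists_card_eq
  exact ⟨K, inferInstance, P.subgroupOf K, inferInstance,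
    ⟨m, (Nat.card_congr (subgroupOfEquivOfLe hPK).toEquiv).trans hm⟩, hKP, hGK.exists_card_eq⟩

theorem normal_closure_of_conj_mem [Finite G] {s t : Set G} (ht : closure t = ⊤)
    (h : ∀ g ∈ t, ∀ x ∈ s, g * x * g⁻¹ ∈ closure s) : (closure s).Normal := by
  rw [← normalizer_eq_top_iff, eq_top_iff, ← ht, closure_le]
  intro g hg
  rw [SetLike.mem_coe, mem_normalizer_iff_map_conj_eq]
  refine eq_of_le_of_card_ge ?_ (card_map_of_injective (MulAut.conj g).injective).ge
  rw [MonoidHom.map_closure, closure_le]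
  rintro _ ⟨x, hx, rfl⟩
  exact h g hg x hx

theorem isPGroup_two_closure_pair {x y : G} (hx : x ^ 2 = 1) (hy : y ^ 2 = 1)
    (hxy : Commute x y) : IsPGroup 2 (closure {x, y}) := by
  have hcomm : ∀ z ∈ closure {x, y}, ∀ w ∈ closure {x, y}, Commute z w := fun z hz w hw =>
    Set.centralizer_centralizer_comm_of_comm
      (by
        rintro u (hu | hu) v (hv | hv) <;> rw [hu, hv]
        exacts [hxy.eq, hxy.symm.eq])
      _ (closure_le_centralizer_centralizer _ hz) _ (closure_le_centralizer_centralizer _ hw)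
  have hsq : ∀ z ∈ closure {x, y}, z ^ 2 = 1 := fun z hz => by
    induction hz using closure_induction with
    | mem z hz => rcases hz with rfl | rfl <;> assumption
    | one => exact one_pow 2
    | mul z w hz hw hz2 hw2 => rw [(hcomm z hz w hw).mul_pow, hz2, hw2, one_mul]
    | inv z _ hz2 => rw [inv_pow, hz2, inv_one]
  exact fun z => ⟨1, Subtype.ext (hsq z z.2)⟩

theorem isCyclic_zpowers_sup_quotient (g : G) (N : Subgroup G) [N.Normal] :
    IsCyclic ((zpowers g ⊔ N : Subgroup G) ⧸ N.subgroupOf (zpowers g ⊔ N)) :=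
  have := isCyclic_of_surjective _ (QuotientGroup.mk'_surjective (N.subgroupOf (zpowers g)))
  isCyclic_of_surjective _
    (QuotientGroup.quotientInfEquivProdNormalQuotient (zpowers g) N).surjective

theorem zpowers_mk_eq_top {N : Subgroup G} [N.Normal] {g : G} (h : N ⊔ zpowers g = ⊤) :
    zpowers (g : G ⧸ N) = ⊤ := by
  rw [← QuotientGroup.mk'_apply, ← MonoidHom.map_zpowers, ← bot_sup_eq (map _ _),
    ← QuotientGroup.map_mk'_self N, ← Subgroup.map_sup, h, ← MonoidHom.range_eq_map,
    QuotientGroup.range_mk']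

theorem isPGroup_quotient_of_sup_zpowers_eq_top {p n : ℕ} {N : Subgroup G} [N.Normal] {g : G}
    (h : N ⊔ zpowers g = ⊤) (hg : g ^ p ^ n ∈ N) : IsPGroup p (G ⧸ N) := by
  intro q
  obtain ⟨k, rfl⟩ := mem_zpowers_iff.mp ((zpowers_mk_eq_top h).symm ▸ mem_top q)
  refine ⟨n, ?_⟩
  rw [← zpow_natCast, ← zpow_mul, mul_comm, zpow_mul, zpow_natCast, ← QuotientGroup.mk_pow,
    (QuotientGroup.eq_one_iff _).mpr hg, one_zpow]

theorem isPsi₂₂_of_relations [Finite G] {a b x y : G} (hgen : closure {a, b} = ⊤)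
    (hx : b ^ 2 = x) (hy : a * x * a⁻¹ = y) (hx2 : x ^ 2 = 1) (hxy : x * y = y * x)
    (hay : a * y * a⁻¹ = x * y) (hby : b * y * b⁻¹ = x * y) (hba : b * a * b⁻¹ = x * y * a⁻¹) :
    IsPsi₂₂ G := by
  have hbx : b * x * b⁻¹ = x := by rw [← hx, mul_inv_eq_iff_eq_mul, ← pow_succ', pow_succ]
  have hy2 : y ^ 2 = 1 := by rw [← hy, conj_pow, hx2, mul_one, mul_inv_cancel]
  have hxP : x ∈ closure {x, y} := subset_closure (by simp)
  have hyP : y ∈ closure {x, y} := subset_closure (by simp)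
  have : (closure {x, y}).Normal := normal_closure_of_conj_mem hgen <| by
    simp only [Set.mem_insert_iff, Set.mem_singleton_iff, forall_eq_or_imp, forall_eq]
    exact ⟨⟨hy ▸ hyP, hay ▸ mul_mem hxP hyP⟩, (by rwa [hbx]), hby ▸ mul_mem hxP hyP⟩
  have hK : zpowers a ⊔ closure {x, y} = closure {a, x, y} := by
    rw [zpowers_eq_closure, ← Subgroup.closure_union, Set.singleton_union]
  have haK : a ∈ closure {a, x, y} := subset_closure (by simp)
  have hPK : closure {x, y} ≤ closure {a, x, y} := closure_mono (by simp)
  have : (zpowers a ⊔ closure {x, y}).Normal := hK ▸ normal_closure_of_conj_mem hgen (by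
    simp only [Set.mem_insert_iff, Set.mem_singleton_iff, forall_eq_or_imp, forall_eq]
    refine ⟨⟨?_, hPK (hy ▸ hyP), hPK (hay ▸ mul_mem hxP hyP)⟩,
      ?_, hPK (by rwa [hbx]), hPK (hby ▸ mul_mem hxP hyP)⟩
    · simpa using haK
    · exact hba ▸ mul_mem (hPK (mul_mem hxP hyP)) (inv_mem haK))
  rw [← hK] at haK hPK
  have hKb : zpowers a ⊔ closure {x, y} ⊔ zpowers b = ⊤ := by
    rw [eq_top_iff, ← hgen, closure_le]
    rintro _ (rfl | rfl)
    · exact mem_sup_left haK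
    · exact mem_sup_right (mem_zpowers _)
  exact isPsi₂₂_of_le hPK (isPGroup_two_closure_pair hx2 hy2 hxy)
    (isCyclic_zpowers_sup_quotient a _)
    (isPGroup_quotient_of_sup_zpowers_eq_top (n := 1) hKb (hPK (hx ▸ hxP)))

theorem isPsi₂₂_closure_of_relations [Finite G] {a b x y : G}
    (hx : b ^ 2 = x) (hy : a * x * a⁻¹ = y) (hx2 : x ^ 2 = 1) (hxy : x * y = y * x)
    (hay : a * y * a⁻¹ = x * y) (hby : b * y * b⁻¹ = x * y) (hba : b * a * b⁻¹ = x * y * a⁻¹) :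
    IsPsi₂₂ (closure {a, b}) := by
  have ha : a ∈ closure {a, b} := subset_closure (by simp)
  have hb : b ∈ closure {a, b} := subset_closure (by simp)
  have hxm : x ∈ closure {a, b} := hx ▸ pow_mem hb 2
  have hgen : closure {(⟨a, ha⟩ : closure {a, b}), ⟨b, hb⟩} = ⊤ := by
    rw [eq_top_iff, ← closure_closure_coe_preimage (k := {a, b})]
    exact closure_mono fun g hg => by simpa [Subtype.ext_iff] using hg
  exact isPsi₂₂_of_relations (x := ⟨x, hxm⟩) (y := ⟨y, hy ▸ mul_mem (mul_mem ha hxm) (inv_mem ha)⟩)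
    hgen (Subtype.ext hx) (Subtype.ext hy) (Subtype.ext hx2) (Subtype.ext hxy)
    (Subtype.ext hay) (Subtype.ext hby) (Subtype.ext hba)

end GroupTheory

theorem apply_mem_iff_of_mem_closure {α : Type*} {s : Set (Perm α)} {p : α → Prop}
    (hs : ∀ g ∈ s, ∀ y, p (g y) ↔ p y) {σ : Perm α} (hσ : σ ∈ closure s) (y : α) :
    p (σ y) ↔ p y := by
  induction hσ using closure_induction generalizing y with
  | mem g hg => exact hs g hg y
  | one => rfl
  | mul σ τ _ _ hσ hτ => exact (hσ (τ y)).trans (hτ y)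
  | inv σ _ hσ => simpa using (hσ (σ⁻¹ y)).symm

theorem orbitFinset_eq {G : Subgroup (Perm (Fin 14))} {S : Finset (Fin 14)} (x₀ : Fin 14)
    (hinv : ∀ σ ∈ G, ∀ y, σ y ∈ S ↔ y ∈ S) (hreach : ∀ y ∈ S, ∃ σ ∈ G, σ x₀ = y)
    {x : Fin 14} (hx : x ∈ S) : orbitFinset G x = S := by
  ext y
  simp only [orbitFinset, Finset.mem_filter, Finset.mem_univ, true_and]
  constructor
  · rintro ⟨σ, hσ, rfl⟩
    exact (hinv σ hσ x).2 hx
  · intro hy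
    obtain ⟨τ, hτ, rfl⟩ := hreach y hy
    obtain ⟨ρ, hρ, rfl⟩ := hreach x hx
    exact ⟨τ * ρ⁻¹, mul_mem hτ (inv_mem hρ), by simp⟩

def σ₁ : Perm (Fin 14) := c[1,9,10] * c[2,3,8] * c[4,5,7] * c[11,12,14]

def σ₂ : Perm (Fin 14) := c[1,3,9,6] * c[2,13,8,10] * c[4,11] * c[5,14,12,7]

set_option maxRecDepth 10000 in
theorem isPsi₂₂_H : IsPsi₂₂ H :=
  isPsi₂₂_closure_of_relations (a := σ₁) (b := σ₂) rfl rfl (by decide) (by decide) (by decide)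
    (by decide) (by decide)

def orbit₆ : Finset (Fin 14) := {4, 5, 7, 11, 12, 14}

def orbit₈ : Finset (Fin 14) := {1, 2, 3, 6, 8, 9, 10, 13}

theorem orbitFinset_H_of_mem {S : Finset (Fin 14)} (x₀ : Fin 14)
    (hσ₁ : ∀ y, σ₁ y ∈ S ↔ y ∈ S) (hσ₂ : ∀ y, σ₂ y ∈ S ↔ y ∈ S)
    (hreach : ∀ y ∈ S, ∃ i : Fin 3, ∃ j : Fin 4, (σ₂ ^ (j : ℕ) * σ₁ ^ (i : ℕ)) x₀ = y)
    {x : Fin 14} (hx : x ∈ S) : orbitFinset H x = S := by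
  have h₁ : σ₁ ∈ H := subset_closure (by simp [σ₁])
  have h₂ : σ₂ ∈ H := subset_closure (by simp [σ₂])
  refine orbitFinset_eq x₀ (fun σ hσ => apply_mem_iff_of_mem_closure (p := (· ∈ S)) ?_ hσ)
    (fun y hy => ?_) hx
  · rintro g (rfl | rfl)
    exacts [hσ₁, hσ₂]
  · obtain ⟨i, j, hij⟩ := hreach y hy
    exact ⟨_, mul_mem (pow_mem h₂ _) (pow_mem h₁ _), hij⟩

theorem orbitFinset_H_of_mem_orbit₆ {x : Fin 14} (hx : x ∈ orbit₆) : orbitFinset H x = orbit₆ :=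
  orbitFinset_H_of_mem 4 (by decide) (by decide) (by decide) hx

theorem orbitFinset_H_of_mem_orbit₈ {x : Fin 14} (hx : x ∈ orbit₈) : orbitFinset H x = orbit₈ :=
  orbitFinset_H_of_mem 1 (by decide) (by decide) (by decide) hx

/-- (i) There exist subgroups `P ⊴ K ⊴ H` with `P` of `2`-power order,
`K / P` cyclic and `H / K` of `2`-power order, and (ii) the orbits of `H` on `{1,…,14}` are
exactly the `6`-element set `{4,5,7,11,12,14}` and the `8`-element set `{1,2,3,6,8,9,10,13}`. -/
theorem H_Psi₂₂_and_two_orbits :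
    (∃ K : Subgroup H, ∃ hK : K.Normal, ∃ P : Subgroup K, ∃ hP : P.Normal,
      (∃ m : ℕ, Nat.card P = 2 ^ m) ∧
      (letI := hP; IsCyclic (K ⧸ P)) ∧
      (letI := hK; ∃ m : ℕ, Nat.card (H ⧸ K) = 2 ^ m)) ∧
    (∀ x : Fin 14,
        orbitFinset H x = ({4, 5, 7, 11, 12, 14} : Finset (Fin 14)) ∨
        orbitFinset H x = ({1, 2, 3, 6, 8, 9, 10, 13} : Finset (Fin 14))) ∧
    (∃ x : Fin 14, orbitFinset H x = ({4, 5, 7, 11, 12, 14} : Finset (Fin 14))) ∧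
    (∃ x : Fin 14, orbitFinset H x = ({1, 2, 3, 6, 8, 9, 10, 13} : Finset (Fin 14))) := by
  refine ⟨isPsi₂₂_H, fun x => ?_, ⟨4, orbitFinset_H_of_mem_orbit₆ (by decide)⟩,
    ⟨1, orbitFinset_H_of_mem_orbit₈ (by decide)⟩⟩
  have hx : x ∈ orbit₆ ∨ x ∈ orbit₈ := by revert x; decide
  exact hx.imp orbitFinset_H_of_mem_orbit₆ orbitFinset_H_of_mem_orbit₈
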